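/- Let k be a commutative ring and n ≥ 2 an integer, and let Y be the prime spectrum of kⁿ with its Zariski topology and structure sheaf 𝒪_Y (regarded as a sheaf of not necessarily commutative rings via the forgetful functor). Let X be a topological space, F a sheaf of rings on X, and f : X → Y a continuous map, and let f_*F denote the pushforward sheaf on Y, defined by (f_*F)(V) = F(f⁻¹(V)). Suppose there is a morphism of sheaves of rings α : 𝒪_Y → f_*F and a unital ring homomorphism β : Mₙ(k) → F(X) such that the composite kⁿ → 𝒪_Y(Y) → (f_*F)(Y) = F(X) (the canonical map from kⁿ to global sections of the structure sheaf followed by the global component of α) equals β ∘ d, where d : kⁿ → Mₙ(k) is the diagonal embedding. Then F(U) is the trivial ring for every open set U ⊆ X; in particular the ring of global sections F(X) is trivial. -/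

import Mathlib

universe u

open CategoryTheory Opposite AlgebraicGeometry TopologicalSpace TopCat

/-!
The idempotents `eᵢ = Pi.single i 1` of `kⁿ` give basic opens `D(eᵢ)` covering `Spec kⁿ`, and on
`D(eᵢ)` every `eⱼ` with `j ≠ i` vanishes because `eᵢ eⱼ = 0`. Transporting this through `α`
and `β`, the restriction of `β(Eⱼⱼ)` to `f⁻¹ D(eᵢ)` is zero. A unital ring map out of `Mₙ(k)` that
kills one diagonal matrix unit kills all of them (`Eᵢᵢ = Eᵢⱼ Eⱼⱼ Eⱼᵢ`), hence kills `1 = ∑ Eᵢᵢ`;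
so `F` vanishes on each `f⁻¹ D(eᵢ)`, and by the sheaf axiom on every open set.
-/

theorem Matrix.subsingleton_of_ringHom_single_eq_zero {ι R S : Type*} [Fintype ι] [DecidableEq ι]
    [Semiring R] [Semiring S] (φ : Matrix ι ι R →+* S) {j : ι} (hj : φ (single j j 1) = 0) :
    Subsingleton S := by
  have hφ : ∀ i, φ (single i i 1) = 0 := fun i => by
    have hii : single i i (1 : R) = single i j 1 * (single j j 1 * single j i 1) := by
      simp only [single_mul_single_same, mul_one]
    rw [hii, map_mul, map_mul, hj, zero_mul, mul_zero]
  refine subsingleton_of_zero_eq_one ?_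
  rw [← map_one φ, ← sum_single_one, map_sum, Finset.sum_eq_zero fun i _ => hφ i]

theorem Pi.single_one_mul_single_one_of_ne {ι R : Type*} [DecidableEq ι] [MulZeroOneClass R]
    {i j : ι} (h : i ≠ j) : (Pi.single i 1 : ι → R) * Pi.single j 1 = 0 := by
  ext l
  by_cases hl : l = i <;> simp_all [Pi.single_apply]

theorem PrimeSpectrum.iSup_basicOpen_single_one (ι R : Type*) [Finite ι] [DecidableEq ι]
    [CommSemiring R] : ⨆ i : ι, basicOpen (Pi.single i 1 : ι → R) = ⊤ :=
  iSup_basicOpen_eq_top_iff.mpr (Ideal.span_single_eq_top _)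

theorem AlgebraicGeometry.StructureSheaf.toOpen_basicOpen_eq_zero_of_mul_eq_zero
    {R : Type u} [CommRing R] {r a : R} (h : r * a = 0) :
    StructureSheaf.toOpen R (PrimeSpectrum.basicOpen r) a = 0 :=
  (@IsLocalization.map_eq_zero_iff _ _ (.powers r) _ _ (openAlgebra R _)
    (IsLocalization.to_basicOpen R r) a).mpr ⟨⟨r, 1, pow_one r⟩, h⟩

theorem TopCat.Presheaf.subsingleton_obj_of_le {X : TopCat.{u}} (F : X.Presheaf RingCat.{u})
    {U V : Opens X} (hUV : U ≤ V) [Subsingleton (F.obj (op V))] : Subsingleton (F.obj (op U)) :=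
  subsingleton_of_zero_eq_one <| by
    rw [← map_zero (F.map (homOfLE hUV).op).hom, ← map_one (F.map (homOfLE hUV).op).hom,
      Subsingleton.elim (0 : F.obj (op V)) 1]

theorem TopCat.Sheaf.subsingleton_obj_of_locally {X : TopCat.{u}} (F : X.Sheaf RingCat.{u})
    (U : Opens X) (h : ∀ x ∈ U, ∃ V : Opens X, x ∈ V ∧ Subsingleton (F.obj.obj (op V))) :
    Subsingleton (F.obj.obj (op U)) := by
  choose V hxV hV using h
  refine ⟨fun s t => F.eq_of_locally_eq' (fun x : U => U ⊓ V x x.2) U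
    (fun _ => homOfLE inf_le_left) (fun x hx => Opens.mem_iSup.mpr ⟨⟨x, hx⟩, hx, hxV x hx⟩) s t
    fun x => ?_⟩
  have := hV x x.2
  have := Presheaf.subsingleton_obj_of_le F.obj (inf_le_right : U ⊓ V x x.2 ≤ V x x.2)
  exact Subsingleton.elim _ _

theorem AlgebraicGeometry.StructureSheaf.map_preimage_eq_app_toOpen {R : Type u} [CommRing R]
    {X : TopCat.{u}} {F : X.Presheaf RingCat.{u}} {f : X ⟶ PrimeSpectrum.Top R}
    (α : (Spec.structureSheaf R).obj ⋙ forget₂ CommRingCat RingCat ⟶ f _* F)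
    {a : R} {s : F.obj (op ⊤)}
    (hs : α.app (op ⊤) (StructureSheaf.toOpen R ⊤ a) =
        F.map (homOfLE (le_top : (Opens.map f).obj ⊤ ≤ ⊤)).op s)
    (V : Opens (PrimeSpectrum.Top R)) :
    F.map (homOfLE (le_top : (Opens.map f).obj V ≤ ⊤)).op s =
      α.app (op V) (StructureSheaf.toOpen R V a) := by
  calc F.map (homOfLE le_top).op s
      = (f _* F).map (homOfLE (le_top : V ≤ ⊤)).op (α.app (op ⊤) (StructureSheaf.toOpen R ⊤ a)) := by
        rw [hs, Presheaf.pushforward_obj_map, ← ConcreteCategory.comp_apply, ← F.map_comp]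
        rfl
    _ = α.app (op V) (StructureSheaf.toOpen R V a) :=
        (ConcreteCategory.congr_hom (α.naturality (homOfLE le_top).op) _).symm

theorem stmt_14 (k : Type u) [CommRing k] (n : ℕ) (hn : 2 ≤ n)
    (X : TopCat.{u}) (F : TopCat.Sheaf RingCat.{u} X)
    (f : X ⟶ PrimeSpectrum.Top (Fin n → k))
    (α : (Spec.structureSheaf (Fin n → k)).val ⋙ forget₂ CommRingCat RingCat ⟶
      f _* F.val)
    (β : Matrix (Fin n) (Fin n) k →+* F.val.obj (op ⊤))
    (hcomp : ∀ a : Fin n → k,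
      α.app (op ⊤) (StructureSheaf.toOpen (Fin n → k) ⊤ a) =
        F.val.map (homOfLE (le_top : (Opens.map f).obj ⊤ ≤ ⊤)).op
          (β (Matrix.diagonalRingHom (Fin n) k a))) :
    ∀ U : Opens X, Subsingleton (F.val.obj (op U)) := by
  have : Nontrivial (Fin n) := Fin.nontrivial_iff_two_le.mpr hn
  intro U
  refine F.subsingleton_obj_of_locally U fun x _ => ?_
  obtain ⟨i, hi⟩ : ∃ i, f x ∈ PrimeSpectrum.basicOpen (Pi.single i 1 : Fin n → k) :=
    Opens.mem_iSup.mp (PrimeSpectrum.iSup_basicOpen_single_one (Fin n) k ▸ trivial)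
  obtain ⟨j, hji⟩ := exists_ne i
  refine ⟨(Opens.map f).obj (PrimeSpectrum.basicOpen (Pi.single i 1)), hi,
    Matrix.subsingleton_of_ringHom_single_eq_zero ((F.obj.map (homOfLE le_top).op).hom.comp β)
      (j := j) ?_⟩
  have hres := StructureSheaf.map_preimage_eq_app_toOpen α (hcomp (Pi.single j 1))
    (PrimeSpectrum.basicOpen (Pi.single i 1))
  rw [StructureSheaf.toOpen_basicOpen_eq_zero_of_mul_eq_zero
    (Pi.single_one_mul_single_one_of_ne hji.symm), map_zero] at hres
  rwa [RingHom.comp_apply, ← Matrix.diagonal_single, ← Matrix.diagonalRingHom_apply]
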